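/- arXiv:math/0510631 — 2 statements merged into one kernel-verified Lean document; each statement's English description precedes it below -/
import Mathlib

section
/- Let Γ = A *_C B and let γ ∈ Γ be cyclically reduced. If γ is conjugate in Γ to a cyclically reduced element with reduced form p_1 p_2 ⋯ p_r where r > 1, then γ can be obtained by conjugating some cyclic conjugate p_i ⋯ p_r p_1 ⋯ p_{i-1} of p_1 p_2 ⋯ p_r by an element of C. -/
/-!
Internal characterization of the amalgamated free product `Γ = A *_C B`:
`A` and `B` are subgroups of `Γ` generating `Γ`, the amalgamated subgroup is
`C = A ⊓ B`, and (normal form theorem) the product of any nonempty reduced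
sequence is nontrivial.
-/

variable {Γ : Type*} [Group Γ]

/-- `x` and `y` lie in different factors among `A`, `B`. -/
def DiffFactors (A B : Subgroup Γ) (x y : Γ) : Prop :=
  ¬(x ∈ A ∧ y ∈ A) ∧ ¬(x ∈ B ∧ y ∈ B)

/-- A reduced sequence: every entry lies in `(A ∪ B) \ (A ⊓ B)` and consecutive
entries lie in different factors. -/
def ReducedSeq (A B : Subgroup Γ) (l : List Γ) : Prop :=
  (∀ g ∈ l, (g ∈ A ∨ g ∈ B) ∧ ¬(g ∈ A ∧ g ∈ B)) ∧ l.Chain' (DiffFactors A B)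

/-- `Γ` is the amalgamated free product of its subgroups `A` and `B`
along `C = A ⊓ B`. -/
def IsAmalgam (A B : Subgroup Γ) : Prop :=
  A ⊔ B = ⊤ ∧ ∀ l : List Γ, ReducedSeq A B l → l ≠ [] → l.prod ≠ 1

/-- `g` is cyclically reduced: it has length 1 (it lies in a factor), or it has
a reduced form of length `≥ 2` whose first and last entries lie in different
factors. -/
def AmCyclicallyReduced (A B : Subgroup Γ) (g : Γ) : Prop :=
  (g ∈ A ∨ g ∈ B) ∨
    ∃ l : List Γ, ReducedSeq A B l ∧ l.prod = g ∧ 2 ≤ l.length ∧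
      ∃ x y, l.head? = some x ∧ l.getLast? = some y ∧ DiffFactors A B x y

/-!
Write `γ = g q g⁻¹` with `q` a cyclic conjugate of `p₁ ⋯ pᵣ` and `g = g₁ ⋯ gₘ c` in reduced
form, and peel off the innermost letter `gₘ`. If `gₘ` lies in the factor of the first letter `x`
of `q`, then `gₘ x ∈ C`: otherwise `g₁ ⋯ (gₘ x) ⋯ gₘ⁻¹ ⋯ g₁⁻¹` would be a reduced form of `γ`
whose ends lie in a common factor, which is impossible for a cyclically reduced element since
the ends of reduced forms of the same element lie in the same factors. Moving `x` to the end of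
`q` then shortens `g`. Otherwise `gₘ` lies in the factor of the last letter of `q`, and the same
argument applied to `γ⁻¹` moves that letter to the front.
-/

variable {A B : Subgroup Γ} {a c x x' y : Γ} {l m : List Γ}

def IsSyllable (A B : Subgroup Γ) (x : Γ) : Prop :=
  (x ∈ A ∨ x ∈ B) ∧ ¬(x ∈ A ∧ x ∈ B)

def SameFactor (A B : Subgroup Γ) (x y : Γ) : Prop :=
  (x ∈ A ∧ y ∈ A) ∨ (x ∈ B ∧ y ∈ B)

def IsCyclicallyReducedSeq (A B : Subgroup Γ) (l : List Γ) : Prop :=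
  ReducedSeq A B l ∧ ∃ x t y, l = x :: t ++ [y] ∧ DiffFactors A B x y

theorem List.exists_eq_cons_append_singleton {α : Type*} {l : List α} {x y : α}
    (hl : 2 ≤ l.length) (hx : l.head? = some x) (hy : l.getLast? = some y) :
    ∃ t, l = x :: t ++ [y] := by
  rcases l with _ | ⟨b, l⟩
  · simp at hl
  rcases l.eq_nil_or_concat' with rfl | ⟨t, z, rfl⟩
  · simp at hl
  rw [← List.cons_append, List.getLast?_concat] at hy
  simp only [List.head?_cons, Option.some.injEq] at hx hy
  exact ⟨t, by rw [hx, hy]; rfl⟩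

theorem diffFactors_iff_not_sameFactor : DiffFactors A B x y ↔ ¬SameFactor A B x y :=
  not_or.symm

theorem DiffFactors.symm (h : DiffFactors A B x y) : DiffFactors A B y x :=
  ⟨fun h' => h.1 h'.symm, fun h' => h.2 h'.symm⟩

theorem DiffFactors.of_sameFactor_left (h : DiffFactors A B x y) (hx : SameFactor A B x' x)
    (hx' : IsSyllable A B x') : DiffFactors A B x' y := by
  unfold DiffFactors SameFactor IsSyllable at *
  tauto

theorem DiffFactors.of_sameFactor_right (h : DiffFactors A B x y) (hy : SameFactor A B x' y)
    (hx' : IsSyllable A B x') : DiffFactors A B x x' :=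
  (h.symm.of_sameFactor_left hy hx').symm

theorem sameFactor_of_diffFactors (ha : a ∈ A ∨ a ∈ B) (hx : x ∈ A ∨ x ∈ B)
    (hy : y ∈ A ∨ y ∈ B) (hax : DiffFactors A B a x) (hyx : DiffFactors A B y x) :
    SameFactor A B a y := by
  unfold DiffFactors SameFactor at *
  tauto

theorem not_diffFactors_inv (hx : x ∈ A ∨ x ∈ B) : ¬DiffFactors A B x x⁻¹ := by
  simp only [DiffFactors, inv_mem_iff]
  tauto

theorem SameFactor.mul_left (h : SameFactor A B x y) : SameFactor A B (x * y) x := by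
  rcases h with ⟨hx, hy⟩ | ⟨hx, hy⟩
  exacts [Or.inl ⟨mul_mem hx hy, hx⟩, Or.inr ⟨mul_mem hx hy, hx⟩]

theorem SameFactor.mul_right (h : SameFactor A B x y) : SameFactor A B (x * y) y := by
  rcases h with ⟨hx, hy⟩ | ⟨hx, hy⟩
  exacts [Or.inl ⟨mul_mem hx hy, hy⟩, Or.inr ⟨mul_mem hx hy, hy⟩]

theorem SameFactor.isSyllable_mul (h : SameFactor A B x y) (hC : x * y ∉ A ⊓ B) :
    IsSyllable A B (x * y) := by
  refine ⟨?_, fun h' => hC (Subgroup.mem_inf.2 h')⟩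
  rcases h.mul_left with ⟨h', -⟩ | ⟨h', -⟩
  exacts [Or.inl h', Or.inr h']

theorem IsSyllable.mul_mem_inf (hx : IsSyllable A B x) (hc : c ∈ A ⊓ B) :
    IsSyllable A B (x * c) ∧ SameFactor A B (x * c) x := by
  have hA : x * c ∈ A ↔ x ∈ A := mul_mem_cancel_right (Subgroup.mem_inf.1 hc).1
  have hB : x * c ∈ B ↔ x ∈ B := mul_mem_cancel_right (Subgroup.mem_inf.1 hc).2
  simp only [IsSyllable, SameFactor, hA, hB] at hx ⊢
  tauto

@[simp] theorem isSyllable_inv : IsSyllable A B x⁻¹ ↔ IsSyllable A B x := by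
  simp [IsSyllable]

@[simp] theorem sameFactor_inv_left : SameFactor A B x⁻¹ y ↔ SameFactor A B x y := by
  simp [SameFactor]

@[simp] theorem sameFactor_inv_right : SameFactor A B x y⁻¹ ↔ SameFactor A B x y := by
  simp [SameFactor]

@[simp] theorem diffFactors_inv_left : DiffFactors A B x⁻¹ y ↔ DiffFactors A B x y := by
  simp [DiffFactors]

@[simp] theorem diffFactors_inv_right : DiffFactors A B x y⁻¹ ↔ DiffFactors A B x y := by
  simp [DiffFactors]

namespace ReducedSeq

theorem isSyllable (h : ReducedSeq A B l) (hx : x ∈ l) : IsSyllable A B x :=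
  h.1 x hx

theorem singleton (hx : IsSyllable A B x) : ReducedSeq A B [x] :=
  ⟨fun _ hg => List.mem_singleton.1 hg ▸ hx, List.isChain_singleton x⟩

theorem of_isInfix (h : ReducedSeq A B l) (hm : m <:+: l) : ReducedSeq A B m :=
  ⟨fun g hg => h.1 g (hm.subset hg), h.2.infix hm⟩

theorem append (hl : ReducedSeq A B (l ++ [x])) (hm : ReducedSeq A B (y :: m))
    (hxy : DiffFactors A B x y) : ReducedSeq A B (l ++ [x] ++ y :: m) := by
  refine ⟨fun g hg => ?_, List.isChain_append.2 ⟨hl.2, hm.2, fun u hu v hv => ?_⟩⟩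
  · rcases List.mem_append.1 hg with hg | hg
    exacts [hl.1 g hg, hm.1 g hg]
  · simp only [List.getLast?_concat, List.head?_cons, Option.mem_def, Option.some.injEq]
      at hu hv
    exact hu ▸ hv ▸ hxy

theorem append_overlap {l₁ l₂ l₃ : List Γ} (h₁ : ReducedSeq A B (l₁ ++ l₂))
    (h₂ : ReducedSeq A B (l₂ ++ l₃)) (hne : l₂ ≠ []) : ReducedSeq A B (l₁ ++ l₂ ++ l₃) := by
  refine ⟨fun g hg => ?_, h₁.2.append_overlap h₂.2 hne⟩
  rcases List.mem_append.1 hg with hg | hg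
  exacts [h₁.1 g hg, h₂.1 g (List.mem_append_right _ hg)]

theorem replace_head (h : ReducedSeq A B (x :: m)) (hx' : IsSyllable A B x')
    (hsame : SameFactor A B x' x) : ReducedSeq A B (x' :: m) := by
  refine ⟨List.forall_mem_cons.2 ⟨hx', (List.forall_mem_cons.1 h.1).2⟩, ?_⟩
  obtain ⟨hhead, htail⟩ := List.isChain_cons.1 h.2
  exact List.isChain_cons.2 ⟨fun v hv => (hhead v hv).of_sameFactor_left hsame hx', htail⟩

theorem replace_last (h : ReducedSeq A B (l ++ [x])) (hx' : IsSyllable A B x')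
    (hsame : SameFactor A B x' x) : ReducedSeq A B (l ++ [x']) := by
  obtain ⟨hl, -, hjoin⟩ := List.isChain_append.1 h.2
  refine ⟨fun g hg => ?_, List.isChain_append.2 ⟨hl, List.isChain_singleton x', ?_⟩⟩
  · rcases List.mem_append.1 hg with hg | hg
    · exact h.1 g (List.mem_append_left _ hg)
    · rwa [List.mem_singleton.1 hg]
  · intro u hu v hv
    simp only [List.head?_cons, Option.mem_def, Option.some.injEq] at hv
    exact hv ▸ (hjoin u hu x rfl).of_sameFactor_right hsame hx'

theorem mul_mem_inf (h : ReducedSeq A B (l ++ [x])) (hc : c ∈ A ⊓ B) :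
    ReducedSeq A B (l ++ [x * c]) :=
  have hx := (h.isSyllable (List.mem_append_right _ (List.mem_singleton_self x))).mul_mem_inf hc
  h.replace_last hx.1 hx.2

theorem merge (hl : ReducedSeq A B (l ++ [x])) (hm : ReducedSeq A B (y :: m))
    (hxy : SameFactor A B x y) (hC : x * y ∉ A ⊓ B) : ReducedSeq A B (l ++ [x * y] ++ m) :=
  append_overlap (hl.replace_last (hxy.isSyllable_mul hC) hxy.mul_left)
    (hm.replace_head (hxy.isSyllable_mul hC) hxy.mul_right) (by simp)

theorem map_inv_reverse (h : ReducedSeq A B l) : ReducedSeq A B (l.map (·⁻¹)).reverse := by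
  refine ⟨fun g hg => ?_, ?_⟩
  · obtain ⟨g', hg', rfl⟩ := List.mem_map.1 (List.mem_reverse.1 hg)
    exact isSyllable_inv.2 (h.isSyllable hg')
  · show List.IsChain _ _
    rw [List.isChain_reverse, List.isChain_map]
    exact h.2.imp fun u v huv => by simpa using huv.symm

theorem exists_prod_mul_eq (hl : ReducedSeq A B l) (hc : c ∈ A ⊓ B) (hy : y ∈ A ∨ y ∈ B) :
    ∃ l', ReducedSeq A B l' ∧ ∃ c' ∈ A ⊓ B, l.prod * c * y = l'.prod * c' := by
  have hcy : c * y ∈ A ∨ c * y ∈ B :=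
    hy.imp (mul_mem (Subgroup.mem_inf.1 hc).1) (mul_mem (Subgroup.mem_inf.1 hc).2)
  rw [mul_assoc]
  generalize c * y = z at hcy
  by_cases hz : z ∈ A ⊓ B
  · exact ⟨l, hl, z, hz, rfl⟩
  have hzs : IsSyllable A B z := ⟨hcy, fun h => hz (Subgroup.mem_inf.2 h)⟩
  rcases l.eq_nil_or_concat' with rfl | ⟨l, u, rfl⟩
  · exact ⟨[z], singleton hzs, 1, one_mem _, by simp⟩
  by_cases huz : SameFactor A B u z
  · by_cases hC : u * z ∈ A ⊓ B
    · exact ⟨l, hl.of_isInfix (List.prefix_append l [u]).isInfix, u * z, hC,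
        by simp [List.prod_append, mul_assoc]⟩
    · exact ⟨l ++ [u * z], by simpa using hl.merge (singleton hzs) huz hC, 1, one_mem _,
        by simp [List.prod_append, mul_assoc]⟩
  · exact ⟨l ++ [u] ++ [z], hl.append (singleton hzs) (diffFactors_iff_not_sameFactor.2 huz),
      1, one_mem _, by simp [List.prod_append, mul_assoc]⟩

end ReducedSeq

theorem exists_reducedSeq_prod_mul (hAB : A ⊔ B = ⊤) (g : Γ) :
    ∃ l, ReducedSeq A B l ∧ ∃ c ∈ A ⊓ B, g = l.prod * c := by
  have hg : g ∈ Subgroup.closure ((A : Set Γ) ∪ B) := by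
    rw [← Subgroup.sup_eq_closure, hAB]
    trivial
  induction hg using Subgroup.closure_induction_right with
  | one => exact ⟨[], ⟨by simp, List.isChain_nil⟩, 1, one_mem _, by simp⟩
  | mul_right g _ y hy ih =>
    obtain ⟨l, hl, c, hc, rfl⟩ := ih
    exact hl.exists_prod_mul_eq hc hy
  | mul_inv_cancel g _ y hy ih =>
    obtain ⟨l, hl, c, hc, rfl⟩ := ih
    exact hl.exists_prod_mul_eq hc (hy.imp (inv_mem (x := y)) (inv_mem (x := y)))

namespace IsAmalgam

theorem prod_notMem_inf (hAB : IsAmalgam A B) (hl : ReducedSeq A B l) (hne : l ≠ []) :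
    l.prod ∉ A ⊓ B := by
  intro hC
  obtain ⟨l', x, rfl⟩ := l.eq_nil_or_concat'.resolve_left hne
  refine hAB.2 _ (hl.mul_mem_inf (inv_mem hC)) (by simp) ?_
  simp [List.prod_append]

theorem sameFactor_and_mul_mem_inf (hAB : IsAmalgam A B) (hl : ReducedSeq A B (l ++ [x]))
    (hm : ReducedSeq A B (y :: m)) (h : (l ++ [x]).prod * (y :: m).prod = 1) :
    SameFactor A B x y ∧ x * y ∈ A ⊓ B := by
  by_cases hxy : SameFactor A B x y
  · refine ⟨hxy, by_contra fun hC => hAB.2 _ (hl.merge hm hxy hC) (by simp) ?_⟩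
    simpa [List.prod_append, mul_assoc] using h
  · refine (hAB.2 _ (hl.append hm (diffFactors_iff_not_sameFactor.2 hxy)) (by simp) ?_).elim
    rwa [List.prod_append]

theorem sameFactor_head_of_prod_eq (hAB : IsAmalgam A B) (hl : ReducedSeq A B (x :: l))
    (hm : ReducedSeq A B (y :: m)) (h : (x :: l).prod = (y :: m).prod) :
    SameFactor A B x y ∧ x⁻¹ * y ∈ A ⊓ B := by
  have hl' : ReducedSeq A B ((l.map (·⁻¹)).reverse ++ [x⁻¹]) := by
    simpa using hl.map_inv_reverse
  have hprod : ((l.map (·⁻¹)).reverse ++ [x⁻¹]).prod * (y :: m).prod = 1 := by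
    rw [← h]
    simpa using congrArg (· * (x :: l).prod) (List.prod_inv_reverse (x :: l)).symm
  simpa using hAB.sameFactor_and_mul_mem_inf hl' hm hprod

theorem sameFactor_last_of_prod_eq (hAB : IsAmalgam A B) (hl : ReducedSeq A B (l ++ [x]))
    (hm : ReducedSeq A B (m ++ [y])) (h : (l ++ [x]).prod = (m ++ [y]).prod) :
    SameFactor A B x y := by
  have hm' : ReducedSeq A B (y⁻¹ :: (m.map (·⁻¹)).reverse) := by
    simpa using hm.map_inv_reverse
  have hprod : (l ++ [x]).prod * (y⁻¹ :: (m.map (·⁻¹)).reverse).prod = 1 := by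
    rw [h]
    simpa using congrArg ((m ++ [y]).prod * ·) (List.prod_inv_reverse (m ++ [y])).symm
  simpa using (hAB.sameFactor_and_mul_mem_inf hl hm' hprod).1

end IsAmalgam

theorem IsCyclicallyReducedSeq.rotate (h : IsCyclicallyReducedSeq A B l) (n : ℕ) :
    IsCyclicallyReducedSeq A B (l.rotate n) := by
  induction n with
  | zero => simpa using h
  | succ n ih =>
    obtain ⟨hred, x, t, y, hl, hxy⟩ := ih
    rw [hl] at hred
    rw [← List.rotate_rotate, hl, List.cons_append, ← zero_add 1, List.rotate_cons_succ,
      List.rotate_zero]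
    have hx : IsSyllable A B x := hred.isSyllable List.mem_cons_self
    have htail := hred.of_isInfix (List.suffix_cons x _).isInfix
    refine ⟨htail.append (.singleton hx) hxy.symm, ?_⟩
    rcases t with _ | ⟨z, t⟩
    · exact ⟨y, [], x, rfl, hxy.symm⟩
    · exact ⟨z, t ++ [y], x, by simp, (List.isChain_cons_cons.1 hred.2).1.symm⟩

theorem IsCyclicallyReducedSeq.isRotated (h : IsCyclicallyReducedSeq A B l) (hlm : l ~r m) :
    IsCyclicallyReducedSeq A B m := by
  obtain ⟨n, rfl⟩ := hlm
  exact h.rotate n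

namespace AmCyclicallyReduced

variable {γ : Γ}

theorem inv (h : AmCyclicallyReduced A B γ) : AmCyclicallyReduced A B γ⁻¹ := by
  rcases h with h | ⟨l, hl, rfl, hlen, a, b, ha, hb, hab⟩
  · exact Or.inl (h.imp inv_mem inv_mem)
  · refine Or.inr ⟨(l.map (·⁻¹)).reverse, hl.map_inv_reverse, (List.prod_inv_reverse l).symm,
      by simpa using hlen, b⁻¹, a⁻¹, by simp [hb], by simp [ha], by simpa using hab.symm⟩

theorem diffFactors_of_prod_eq (hAB : IsAmalgam A B) (hγ : AmCyclicallyReduced A B γ)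
    (hw : ReducedSeq A B (x :: l ++ [y])) (hprod : (x :: l ++ [y]).prod = γ) :
    DiffFactors A B x y := by
  rcases hγ with hγ | ⟨m, hm, rfl, hlen, a, b, ha, hb, hab⟩
  · exfalso
    by_cases hC : γ ∈ A ⊓ B
    · exact hAB.prod_notMem_inf hw (by simp) (hprod ▸ hC)
    have hxc := (hAB.sameFactor_head_of_prod_eq hw
      (.singleton ⟨hγ, fun h => hC (Subgroup.mem_inf.2 h)⟩) (by simpa using hprod)).2
    refine hAB.prod_notMem_inf (hw.of_isInfix (List.suffix_cons x (l ++ [y])).isInfix)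
      (by simp) ?_
    rwa [← hprod, List.cons_append, List.prod_cons, inv_mul_cancel_left] at hxc
  · obtain ⟨t, rfl⟩ := List.exists_eq_cons_append_singleton hlen ha hb
    have hxa := (hAB.sameFactor_head_of_prod_eq hw hm hprod).1
    have hyb := hAB.sameFactor_last_of_prod_eq (l := x :: l) (m := a :: t) hw hm hprod
    exact (hab.of_sameFactor_left hxa (hw.isSyllable List.mem_cons_self)).of_sameFactor_right hyb
      (hw.isSyllable (by simp))

theorem mul_mem_inf_of_sameFactor (hAB : IsAmalgam A B) (hγ : AmCyclicallyReduced A B γ)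
    {g t : List Γ} (hg : ReducedSeq A B (g ++ [a])) (hq : ReducedSeq A B (x :: t ++ [y]))
    (hxy : DiffFactors A B x y) (hax : SameFactor A B a x)
    (hconj : γ = (g ++ [a]).prod * (x :: t ++ [y]).prod * (g ++ [a]).prod⁻¹) :
    a * x ∈ A ⊓ B := by
  by_contra hC
  have ha : IsSyllable A B a := hg.isSyllable (by simp)
  have hmerged : ReducedSeq A B (g ++ a * x :: t ++ [y]) := by
    simpa using hg.merge (by simpa using hq) hax hC
  have hinv : ReducedSeq A B (a⁻¹ :: (g.map (·⁻¹)).reverse) := by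
    simpa using hg.map_inv_reverse
  have hw := hmerged.append hinv (by simpa using hxy.symm.of_sameFactor_right hax ha)
  have hprod : (g ++ a * x :: t ++ [y] ++ a⁻¹ :: (g.map (·⁻¹)).reverse).prod = γ := by
    rw [hconj]
    simp [List.prod_append, ← List.prod_inv_reverse, mul_assoc]
  rcases g with _ | ⟨b, g⟩
  · refine diffFactors_iff_not_sameFactor.1 ?_ (sameFactor_inv_right.2 hax.mul_left)
    exact hγ.diffFactors_of_prod_eq hAB (l := t ++ [y]) (by simpa using hw)
      (by simpa using hprod)
  · refine not_diffFactors_inv (hg.isSyllable List.mem_cons_self).1 ?_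
    exact hγ.diffFactors_of_prod_eq hAB
      (l := g ++ a * x :: t ++ [y] ++ a⁻¹ :: (g.map (·⁻¹)).reverse) (by simpa using hw)
      (by simpa using hprod)

theorem exists_isRotated_conj_of_concat (hAB : IsAmalgam A B) (hγ : AmCyclicallyReduced A B γ)
    {g q : List Γ} (hg : ReducedSeq A B (g ++ [a])) (hq : IsCyclicallyReducedSeq A B q)
    (hconj : γ = (g ++ [a]).prod * q.prod * (g ++ [a]).prod⁻¹) :
    ∃ c ∈ A ⊓ B, ∃ q', q ~r q' ∧ γ = g.prod * c * q'.prod * (g.prod * c)⁻¹ := by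
  obtain ⟨hred, x, t, y, rfl, hxy⟩ := hq
  have ha : IsSyllable A B a := hg.isSyllable (by simp)
  by_cases hax : SameFactor A B a x
  · refine ⟨a * x, hγ.mul_mem_inf_of_sameFactor hAB hg hred hxy hax hconj, t ++ [y] ++ [x],
      (List.isRotated_concat x (t ++ [y])).symm, ?_⟩
    rw [hconj]
    simp [List.prod_append, mul_assoc]
  · have hay : SameFactor A B a y :=
      sameFactor_of_diffFactors ha.1 (hred.isSyllable (by simp)).1 (hred.isSyllable (by simp)).1
        (diffFactors_iff_not_sameFactor.2 hax) hxy.symm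
    have hred' : ReducedSeq A B (y⁻¹ :: (t.map (·⁻¹)).reverse ++ [x⁻¹]) := by
      simpa using hred.map_inv_reverse
    have hmem := hγ.inv.mul_mem_inf_of_sameFactor hAB hg hred' (by simpa using hxy.symm)
      (sameFactor_inv_right.2 hay)
      (by rw [hconj]; simp [List.prod_append, ← List.prod_inv_reverse, mul_assoc])
    refine ⟨a * y⁻¹, hmem, y :: x :: t, List.isRotated_concat y (x :: t), ?_⟩
    rw [hconj]
    simp [List.prod_append, mul_assoc]

theorem exists_isRotated_conj (hAB : IsAmalgam A B) (hγ : AmCyclicallyReduced A B γ)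
    (hl : IsCyclicallyReducedSeq A B l) {g : List Γ} (hg : ReducedSeq A B g)
    (hc : c ∈ A ⊓ B) {q : List Γ} (hq : l ~r q)
    (hconj : γ = g.prod * c * q.prod * (g.prod * c)⁻¹) :
    ∃ q', l ~r q' ∧ ∃ c' ∈ A ⊓ B, γ = c' * q'.prod * c'⁻¹ := by
  induction g using List.reverseRecOn generalizing c q with
  | nil => exact ⟨q, hq, c, hc, by simpa using hconj⟩
  | append_singleton g a ih =>
    obtain ⟨c', hc', q', hqq', hconj'⟩ := hγ.exists_isRotated_conj_of_concat hAB (hg.mul_mem_inf hc)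
      (hl.isRotated hq) (by rw [hconj]; simp [List.prod_append, mul_assoc])
    exact ih (hg.of_isInfix (List.prefix_append g [a]).isInfix) hc' (hq.trans hqq') hconj'

end AmCyclicallyReduced

/-- Conjugation theorem in an amalgam, case (iii): if the cyclically reduced
element `γ` is conjugate to a cyclically reduced element with reduced form
`p_1 p_2 ⋯ p_r`, `r > 1`, then `γ` is obtained by conjugating some cyclic
conjugate `p_i ⋯ p_r p_1 ⋯ p_{i-1}` by an element of `C = A ⊓ B`. -/
theorem amalgam_conj_cyclic_conjugate (A B : Subgroup Γ) (hAB : IsAmalgam A B)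
    (γ : Γ) (hcyc : AmCyclicallyReduced A B γ) (l : List Γ)
    (hl : ReducedSeq A B l) (hlen : 1 < l.length)
    (hform : ∃ x y, l.head? = some x ∧ l.getLast? = some y ∧ DiffFactors A B x y)
    (hconj : ∃ g : Γ, γ = g * l.prod * g⁻¹) :
    ∃ i < l.length, ∃ c ∈ A ⊓ B,
      γ = c * (l.drop i ++ l.take i).prod * c⁻¹ := by
  obtain ⟨g, rfl⟩ := hconj
  obtain ⟨x, y, hx, hy, hxy⟩ := hform
  obtain ⟨t, hlt⟩ := List.exists_eq_cons_append_singleton hlen hx hy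
  obtain ⟨lg, hlg, c, hc, rfl⟩ := exists_reducedSeq_prod_mul hAB.1 g
  obtain ⟨_, ⟨n, rfl⟩, c', hc', hγ⟩ :=
    hcyc.exists_isRotated_conj hAB ⟨hl, x, t, y, hlt, hxy⟩ hlg hc (List.IsRotated.refl l) rfl
  exact ⟨n % l.length, Nat.mod_lt _ (by omega), c', hc', by
    rwa [← List.rotate_eq_drop_append_take_mod]⟩
end

section
/- Let Γ = A*_φ and let γ ∈ Γ be cyclically reduced. If γ is conjugate in Γ to a cyclically reduced element γ' with reduced form u_1 t^{μ_1} u_2 t^{μ_2} ⋯ u_m t^{μ_m} with m ≥ 1, then there exists an index r with 1 ≤ r ≤ m such that γ can be obtained by conjugating the cyclic conjugate u_{r+1} t^{μ_{r+1}} ⋯ u_m t^{μ_m} u_1 t^{μ_1} ⋯ u_r t^{μ_r} of γ' by an element of C_{μ_r}. -/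
/-!
Internal characterization of the HNN extension `Γ = A*_φ`:
`A` is a subgroup of `Γ`, `t ∈ Γ` is the stable letter, `Cm = C_{-1}` and
`Cp = C_{+1}` are subgroups of `A` with `t⁻¹ Cm t = Cp` (so
`φ(c) = t⁻¹ c t` for `c ∈ Cm`), `A ∪ {t}` generates `Γ`, and Britton's lemma
holds: a reduced word `g₀ t^{ε₁} g₁ ⋯ t^{εₙ} gₙ` with `n ≥ 1` is nontrivial.
-/

variable {Γ : Type*} [Group Γ]

/-- The subgroup `C_ε` : `C_{+1} = Cp` when `ε = 1`, and `C_{-1} = Cm`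
otherwise. -/
def toCsub (Cm Cp : Subgroup Γ) (ε : ℤ) : Subgroup Γ := if ε = 1 then Cp else Cm

/-- The pair `(g₀, [(ε₁, g₁), …, (εₙ, gₙ)])` encodes the word
`g₀ t^{ε₁} g₁ ⋯ t^{εₙ} gₙ`; it is reduced when all `gᵢ ∈ A`, all `εᵢ = ±1`,
and it contains no pinch `t^{εᵢ} gᵢ t^{-εᵢ}` with `gᵢ ∈ C_{εᵢ}`. -/
def HNNReducedWord (A Cm Cp : Subgroup Γ) (g₀ : Γ) (w : List (ℤ × Γ)) : Prop :=
  g₀ ∈ A ∧ (∀ p ∈ w, (p.1 = 1 ∨ p.1 = -1) ∧ p.2 ∈ A) ∧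
    w.Chain' fun p q => q.1 = -p.1 → p.2 ∉ toCsub Cm Cp p.1

/-- The element of `Γ` represented by the word
`g₀ t^{ε₁} g₁ ⋯ t^{εₙ} gₙ`. -/
def hnnProd (t g₀ : Γ) (w : List (ℤ × Γ)) : Γ :=
  g₀ * (w.map fun p => t ^ p.1 * p.2).prod

/-- `Γ` is the HNN extension of its subgroup `A` relative to the isomorphism
`φ : Cm → Cp`, `φ(c) = t⁻¹ c t`, with stable letter `t`. -/
def IsHNN (A Cm Cp : Subgroup Γ) (t : Γ) : Prop :=
  Cm ≤ A ∧ Cp ≤ A ∧ (∀ c : Γ, c ∈ Cm ↔ t⁻¹ * c * t ∈ Cp) ∧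
    Subgroup.closure ((A : Set Γ) ∪ {t}) = ⊤ ∧
    ∀ g₀ w, HNNReducedWord A Cm Cp g₀ w → w ≠ [] → hnnProd t g₀ w ≠ 1

/-- `g` is cyclically reduced: `g ∈ A` (length 1), or `g` has a reduced form
`g₁ t^{ε₁} g₂ ⋯ gₙ t^{εₙ} gₙ₊₁` with `gₙ₊₁ = 1` and either `n = 1` or
`t^{εₙ} g₁ t^{ε₁}` is not a pinch. -/
def HNNCyclicallyReduced (A Cm Cp : Subgroup Γ) (t g : Γ) : Prop :=
  g ∈ A ∨
    ∃ g₀ w, HNNReducedWord A Cm Cp g₀ w ∧ hnnProd t g₀ w = g ∧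
      ∃ p q, w.head? = some q ∧ w.getLast? = some p ∧ p.2 = 1 ∧
        (w.length = 1 ∨ ¬(q.1 = -p.1 ∧ g₀ ∈ toCsub Cm Cp p.1))

/-!
Write the conjugator as a reduced word `g = g₀ t^{ε₁} g₁ ⋯ t^{εₙ} gₙ` and induct on `n`.

Britton's lemma, applied to `(y w)⁻¹ (x v) = 1`, shows that two reduced forms `x v` and `y w` of
the same element begin with the same letter `t^ε` with `y⁻¹ x ∈ C_{-ε}`, and (by inversion) end
with the same letter and last coefficients agreeing up to `C`. Comparing an arbitrary reduced form
of the cyclically reduced `γ` with one whose last coefficient is `1` then shows: its last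
coefficient lies in `C_{εₙ}`, and its cyclic junction `t^{εₙ} gₙ g₀ t^{ε₁}` is not a pinch.

For `n = 0`, `g u₁ t^{μ₁} ⋯ u_m t^{μ_m} g⁻¹` is a reduced form of `γ`, so `g⁻¹ ∈ C_{μ_m}`. For
`n > 0`, the word `g γ' g⁻¹` has a pinch at `t^{εₙ} gₙ u₁ t^{μ₁}` or at `t^{μ_m} gₙ⁻¹ t^{-εₙ}`:
otherwise it is a reduced form of `γ` whose cyclic junction `t^{-ε₁} g₀⁻¹ g₀ t^{ε₁}` is a pinch.
Absorbing that pinch into the conjugator shortens it by one letter and rotates `γ'` by one block.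
-/

theorem List.isChain_rotate_of_getElem {α : Type*} {R : α → α → Prop} {L : List α}
    (h : ∀ i (hi : i < L.length), R L[i] (L[(i + 1) % L.length]'(Nat.mod_lt _ (by omega))))
    (n : ℕ) : (L.rotate n).IsChain R := by
  rw [List.isChain_iff_getElem]
  intro i hi
  simp only [List.length_rotate] at hi
  have h' := h ((i + n) % L.length) (Nat.mod_lt _ (by omega))
  simp only [List.getElem_rotate]
  simp only [Nat.mod_add_mod, show i + n + 1 = i + 1 + n by omega] at h'
  exact h'

section

variable {A Cm Cp : Subgroup Γ} {t x y b : Γ} {v w : List (ℤ × Γ)} {p q : ℤ × Γ}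

def HNNNoPinch (Cm Cp : Subgroup Γ) (p q : ℤ × Γ) : Prop := q.1 = -p.1 → p.2 ∉ toCsub Cm Cp p.1

theorem IsHNN.toCsub_le (hH : IsHNN A Cm Cp t) (ε : ℤ) : toCsub Cm Cp ε ≤ A := by
  unfold toCsub
  split_ifs
  exacts [hH.2.1, hH.1]

theorem IsHNN.conj_mem_toCsub_neg (hH : IsHNN A Cm Cp t) {ε : ℤ} (hε : ε = 1 ∨ ε = -1)
    {c : Γ} (hc : c ∈ toCsub Cm Cp ε) : t ^ ε * c * t ^ (-ε) ∈ toCsub Cm Cp (-ε) := by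
  have hφ := hH.2.2.1
  rcases hε with rfl | rfl
  · simp only [toCsub, if_true, show (-1 : ℤ) ≠ 1 by decide, if_false] at hc ⊢
    rw [hφ]
    simpa [mul_assoc] using hc
  · simp only [toCsub, show (-1 : ℤ) ≠ 1 by decide, if_false, neg_neg, if_true] at hc ⊢
    simpa [mul_assoc] using (hφ c).1 hc

@[simp] theorem hnnProd_nil (t x : Γ) : hnnProd t x [] = x := by simp [hnnProd]

theorem hnnProd_cons (t x : Γ) (p : ℤ × Γ) (w : List (ℤ × Γ)) :
    hnnProd t x (p :: w) = x * t ^ p.1 * hnnProd t p.2 w := by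
  simp [hnnProd, mul_assoc]

theorem hnnProd_append (t x : Γ) (v w : List (ℤ × Γ)) :
    hnnProd t x (v ++ w) = hnnProd t x v * hnnProd t 1 w := by
  simp [hnnProd, mul_assoc]

theorem hnnProd_concat (t x : Γ) (w : List (ℤ × Γ)) (p : ℤ × Γ) :
    hnnProd t x (w ++ [p]) = hnnProd t x w * (t ^ p.1 * p.2) := by
  simp [hnnProd, mul_assoc]

theorem hnnProd_eq_mul_hnnProd_one (t x : Γ) (w : List (ℤ × Γ)) :
    hnnProd t x w = x * hnnProd t 1 w := by
  simp [hnnProd]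

theorem hnnProd_concat_mul (t x b : Γ) (v : List (ℤ × Γ)) (p : ℤ × Γ) :
    hnnProd t x (v ++ [(p.1, p.2 * b)]) = hnnProd t x (v ++ [p]) * b := by
  simp [hnnProd, mul_assoc]

theorem HNNReducedWord.of_mem (hw : HNNReducedWord A Cm Cp x w) (hp : p ∈ w) :
    (p.1 = 1 ∨ p.1 = -1) ∧ p.2 ∈ A :=
  hw.2.1 p hp

theorem HNNReducedWord.left_of_append (hw : HNNReducedWord A Cm Cp x (v ++ w)) :
    HNNReducedWord A Cm Cp x v :=
  ⟨hw.1, fun p hp => hw.2.1 p (List.mem_append_left w hp), hw.2.2.left_of_append⟩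

theorem HNNReducedWord.tail (hw : HNNReducedWord A Cm Cp x (p :: w)) :
    HNNReducedWord A Cm Cp p.2 w :=
  ⟨(hw.of_mem (List.mem_cons_self ..)).2, fun q hq => hw.2.1 q (List.mem_cons_of_mem p hq),
    hw.2.2.tail⟩

theorem HNNReducedWord.append (hv : HNNReducedWord A Cm Cp x v) (hw : HNNReducedWord A Cm Cp y w)
    (hvw : ∀ p ∈ v.getLast?, ∀ q ∈ w.head?, HNNNoPinch Cm Cp p q) :
    HNNReducedWord A Cm Cp x (v ++ w) := by
  refine ⟨hv.1, fun p hp => ?_, hv.2.2.append hw.2.2 hvw⟩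
  rcases List.mem_append.1 hp with hp | hp
  exacts [hv.2.1 p hp, hw.2.1 p hp]

theorem HNNReducedWord.concat_mul (hv : HNNReducedWord A Cm Cp x (v ++ [p])) (hb : b ∈ A) :
    HNNReducedWord A Cm Cp x (v ++ [(p.1, p.2 * b)]) := by
  have hp := hv.of_mem (List.mem_append_right v (List.mem_singleton_self p))
  refine hv.left_of_append.append (y := 1) ⟨one_mem A, ?_, List.isChain_singleton _⟩ ?_
  · simpa using ⟨hp.1, mul_mem hp.2 hb⟩
  · have hj := (List.isChain_append.1 hv.2.2).2.2
    simpa [HNNNoPinch] using fun q hq => hj q hq p rfl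

def hnnInvWord (x : Γ) : List (ℤ × Γ) → List (ℤ × Γ)
  | [] => []
  | p :: w => hnnInvWord p.2 w ++ [(-p.1, x⁻¹)]

def hnnLastCoeff {α : Type*} (x : α) : List (ℤ × α) → α
  | [] => x
  | p :: w => hnnLastCoeff p.2 w

@[simp] theorem hnnLastCoeff_concat {α : Type*} (x : α) (w : List (ℤ × α)) (p : ℤ × α) :
    hnnLastCoeff x (w ++ [p]) = p.2 := by
  induction w generalizing x with
  | nil => rfl
  | cons q w ih => exact ih q.2

theorem hnnProd_hnnInvWord (t x : Γ) (w : List (ℤ × Γ)) :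
    hnnProd t (hnnLastCoeff x w)⁻¹ (hnnInvWord x w) = (hnnProd t x w)⁻¹ := by
  induction w generalizing x with
  | nil => simp [hnnInvWord, hnnLastCoeff]
  | cons p w ih =>
    rw [hnnInvWord, hnnLastCoeff, hnnProd_append, ih, hnnProd_cons]
    simp [hnnProd, mul_assoc, zpow_neg]

@[simp] theorem getLast?_hnnInvWord_cons (x : Γ) (p : ℤ × Γ) (w : List (ℤ × Γ)) :
    (hnnInvWord x (p :: w)).getLast? = some (-p.1, x⁻¹) := by
  simp [hnnInvWord]

theorem head?_hnnInvWord_concat (x : Γ) (w : List (ℤ × Γ)) (p : ℤ × Γ) :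
    (hnnInvWord x (w ++ [p])).head? = some (-p.1, (hnnLastCoeff x w)⁻¹) := by
  induction w generalizing x with
  | nil => rfl
  | cons q w ih => simp [hnnInvWord, hnnLastCoeff, ih]

theorem HNNReducedWord.inv (hw : HNNReducedWord A Cm Cp x w) :
    HNNReducedWord A Cm Cp (hnnLastCoeff x w)⁻¹ (hnnInvWord x w) := by
  induction w generalizing x with
  | nil => exact ⟨inv_mem hw.1, by simp [hnnInvWord], List.isChain_nil⟩
  | cons p w ih =>
    have hp := hw.of_mem (List.mem_cons_self ..)
    refine (ih hw.tail).append (y := 1) ⟨one_mem A, ?_, List.isChain_singleton _⟩ ?_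
    · simpa [neg_eq_iff_eq_neg, or_comm] using ⟨hp.1, hw.1⟩
    · cases w with
      | nil => simp [hnnInvWord]
      | cons q w =>
        have hpq := (List.isChain_cons_cons.1 hw.2.2).1
        simp only [getLast?_hnnInvWord_cons, Option.mem_def, Option.some.injEq, List.head?_cons,
          forall_eq', HNNNoPinch, neg_neg, inv_mem_iff]
        intro h
        simpa [← h] using hpq (by omega)

theorem IsHNN.hnnProd_ne_one (hH : IsHNN A Cm Cp t) (hw : HNNReducedWord A Cm Cp x w)
    (hw₀ : w ≠ []) : hnnProd t x w ≠ 1 :=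
  hH.2.2.2.2 x w hw hw₀

theorem IsHNN.hnnProd_not_mem (hH : IsHNN A Cm Cp t) (hw : HNNReducedWord A Cm Cp x w)
    (hw₀ : w ≠ []) : hnnProd t x w ∉ A := by
  intro hA
  refine hH.hnnProd_ne_one (x := (hnnProd t x w)⁻¹ * x) ⟨mul_mem (inv_mem hA) hw.1, hw.2⟩ hw₀ ?_
  simp [hnnProd, mul_assoc]

/-- Britton's lemma for the word of `(y w)⁻¹ (x v) = 1`, which is reduced unless its middle
`t^{-q.1} y⁻¹ x t^{p.1}` is a pinch. -/
theorem IsHNN.head_eq (hH : IsHNN A Cm Cp t) (hv : HNNReducedWord A Cm Cp x v)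
    (hw : HNNReducedWord A Cm Cp y w) (hvw : hnnProd t x v = hnnProd t y w)
    (hp : v.head? = some p) (hq : w.head? = some q) :
    p.1 = q.1 ∧ y⁻¹ * x ∈ toCsub Cm Cp (-q.1) := by
  obtain ⟨v, rfl⟩ := List.head?_eq_some_iff.1 hp
  obtain ⟨w, rfl⟩ := List.head?_eq_some_iff.1 hq
  by_contra hpinch
  have hinv := hw.inv
  rw [hnnInvWord] at hinv
  refine hH.hnnProd_ne_one ((hinv.concat_mul (b := x) hv.1).append hv ?_) (by simp) ?_
  · simpa [HNNNoPinch] using fun h h' => hpinch ⟨h, h'⟩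
  · have hinv_prod := hnnProd_hnnInvWord t y (q :: w)
    rw [hnnInvWord] at hinv_prod
    rw [hnnProd_append, hnnProd_concat_mul, hinv_prod, ← hvw]
    simp [hnnProd, mul_assoc]

theorem IsHNN.getLast_eq (hH : IsHNN A Cm Cp t) (hv : HNNReducedWord A Cm Cp x v)
    (hw : HNNReducedWord A Cm Cp y w) (hvw : hnnProd t x v = hnnProd t y w)
    (hp : v.getLast? = some p) (hq : w.getLast? = some q) :
    p.1 = q.1 ∧ p.2 * q.2⁻¹ ∈ toCsub Cm Cp p.1 := by
  obtain ⟨v, rfl⟩ := List.getLast?_eq_some_iff.1 hp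
  obtain ⟨w, rfl⟩ := List.getLast?_eq_some_iff.1 hq
  have h := hH.head_eq hv.inv hw.inv
    (by rw [hnnProd_hnnInvWord, hnnProd_hnnInvWord, hvw])
    (head?_hnnInvWord_concat x v p) (head?_hnnInvWord_concat y w q)
  simp only [hnnLastCoeff_concat, inv_inv, neg_neg, neg_inj] at h
  refine ⟨h.1, ?_⟩
  simpa [h.1, mul_inv_rev] using inv_mem h.2

theorem HNNCyclicallyReduced.getLast_mem {γ : Γ} (hγ : HNNCyclicallyReduced A Cm Cp t γ)
    (hH : IsHNN A Cm Cp t) (hv : HNNReducedWord A Cm Cp x v) (hvγ : hnnProd t x v = γ)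
    (hp : v.getLast? = some p) : p.2 ∈ toCsub Cm Cp p.1 := by
  rcases hγ with hA | ⟨y, w, hw, hwγ, q, -, -, hq, hq1, -⟩
  · exact absurd (hvγ ▸ hA) (hH.hnnProd_not_mem hv (by rintro rfl; simp at hp))
  · simpa [hq1] using (hH.getLast_eq hv hw (hvγ.trans hwγ.symm) hp hq).2

/-- In every reduced form `x t^{ε₁} ⋯ t^{εₙ} gₙ` of `γ`, the cyclic junction `t^{εₙ} gₙ x t^{ε₁}`
is not a pinch. -/
theorem HNNCyclicallyReduced.not_pinch_wrap {γ : Γ} (hγ : HNNCyclicallyReduced A Cm Cp t γ)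
    (hH : IsHNN A Cm Cp t) (hv : HNNReducedWord A Cm Cp x v) (hvγ : hnnProd t x v = γ)
    (hp : v.getLast? = some p) (hv₁ : v.head?.map Prod.fst = some (-p.1)) :
    p.2 * x ∉ toCsub Cm Cp p.1 := by
  obtain ⟨q, hq, hqp⟩ := Option.map_eq_some_iff.1 hv₁
  rcases hγ with hA | ⟨y, w, hw, hwγ, p', q', hq', hp', hp'1, hcyc⟩
  · exact absurd (hvγ ▸ hA) (hH.hnnProd_not_mem hv (by rintro rfl; simp at hp))
  have hvw := hvγ.trans hwγ.symm
  obtain ⟨hqq', hyx⟩ := hH.head_eq hv hw hvw hq hq'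
  obtain ⟨hpp', hp2⟩ := hH.getLast_eq hv hw hvw hp hp'
  rw [hp'1, inv_one, mul_one] at hp2
  intro hpx
  have hx : x ∈ toCsub Cm Cp p.1 := by simpa using mul_mem (inv_mem hp2) hpx
  have hy : y ∈ toCsub Cm Cp p.1 := by
    rw [← hqq', hqp, neg_neg] at hyx
    simpa using mul_mem hx (inv_mem hyx)
  rcases hcyc with hlen | hpinch
  · obtain ⟨z, rfl⟩ := List.length_eq_one_iff.1 hlen
    simp only [List.head?_cons, List.getLast?_singleton, Option.some.injEq] at hq' hp'
    have hp1 := (hv.of_mem (List.mem_of_getLast? hp)).1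
    rw [hqq', ← hq', hp', ← hpp'] at hqp
    omega
  · exact hpinch ⟨by rw [← hqq', ← hpp', hqp], hpp' ▸ hy⟩

theorem HNNReducedWord.exists_mul (hw : HNNReducedWord A Cm Cp x w) (hb : b ∈ A) :
    ∃ y v, HNNReducedWord A Cm Cp y v ∧ v.length = w.length ∧
      hnnProd t y v = hnnProd t x w * b := by
  rcases List.eq_nil_or_concat' w with rfl | ⟨w, p, rfl⟩
  · exact ⟨x * b, [], ⟨mul_mem hw.1 hb, by simp, List.isChain_nil⟩, rfl, by simp⟩
  · exact ⟨x, _, hw.concat_mul hb, by simp, hnnProd_concat_mul t x b w p⟩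

theorem HNNReducedWord.exists_mul_zpow (hH : IsHNN A Cm Cp t) (hw : HNNReducedWord A Cm Cp x w)
    {ε : ℤ} (hε : ε = 1 ∨ ε = -1) :
    ∃ y v, HNNReducedWord A Cm Cp y v ∧ hnnProd t y v = hnnProd t x w * t ^ ε := by
  have hε' : HNNReducedWord A Cm Cp 1 [(ε, 1)] :=
    ⟨one_mem A, by simpa using hε, List.isChain_singleton _⟩
  rcases List.eq_nil_or_concat' w with rfl | ⟨w, p, rfl⟩
  · exact ⟨x, [(ε, 1)], ⟨hw.1, hε'.2⟩, by simp [hnnProd]⟩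
  by_cases hpinch : ε = -p.1 ∧ p.2 ∈ toCsub Cm Cp p.1
  · have hp := hw.of_mem (List.mem_append_right w (List.mem_singleton_self p))
    obtain ⟨y, v, hv, -, hvw⟩ := hw.left_of_append.exists_mul (t := t)
      (hH.toCsub_le _ (hH.conj_mem_toCsub_neg hp.1 hpinch.2))
    refine ⟨y, v, hv, ?_⟩
    rw [hvw, hnnProd_append, hpinch.1]
    simp [hnnProd, mul_assoc]
  · refine ⟨x, _, hw.append hε' ?_, by simp [hnnProd, mul_assoc]⟩
    simpa [HNNNoPinch] using fun h h' => hpinch ⟨h, h'⟩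

theorem IsHNN.exists_hnnReducedWord (hH : IsHNN A Cm Cp t) (g : Γ) :
    ∃ x w, HNNReducedWord A Cm Cp x w ∧ hnnProd t x w = g := by
  have hg : g ∈ Subgroup.closure ((A : Set Γ) ∪ {t}) := hH.2.2.2.1 ▸ Subgroup.mem_top g
  induction hg using Subgroup.closure_induction_right with
  | one => exact ⟨1, [], ⟨one_mem A, by simp, List.isChain_nil⟩, by simp⟩
  | mul_right g _ a ha ih =>
    obtain ⟨x, w, hw, rfl⟩ := ih
    rcases ha with ha | rfl
    · obtain ⟨y, v, hv, -, hvw⟩ := hw.exists_mul (t := t) ha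
      exact ⟨y, v, hv, hvw⟩
    · simpa using hw.exists_mul_zpow hH (ε := 1) (by simp)
  | mul_inv_cancel g _ a ha ih =>
    obtain ⟨x, w, hw, rfl⟩ := ih
    rcases ha with ha | rfl
    · obtain ⟨y, v, hv, -, hvw⟩ := hw.exists_mul (t := t) (inv_mem ha)
      exact ⟨y, v, hv, hvw⟩
    · simpa using hw.exists_mul_zpow hH (ε := -1) (by simp)

/-- A block `(μ, u)` stands for `u t^μ`, as in the cyclic word `u₁ t^{μ₁} ⋯ uₘ t^{μₘ}`. -/
def hnnBlockProd (t : Γ) (L : List (ℤ × Γ)) : Γ := (L.map fun p => p.2 * t ^ p.1).prod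

def hnnBlocksWord {α : Type*} : List (ℤ × α) → α → List (ℤ × α)
  | [], _ => []
  | [p], b => [(p.1, b)]
  | p :: q :: L, b => (p.1, q.2) :: hnnBlocksWord (q :: L) b

def HNNBlockNoPinch (Cm Cp : Subgroup Γ) (p q : ℤ × Γ) : Prop :=
  q.1 = -p.1 → q.2 ∉ toCsub Cm Cp p.1

def HNNCyclicWord (A Cm Cp : Subgroup Γ) (L : List (ℤ × Γ)) : Prop :=
  (∀ p ∈ L, (p.1 = 1 ∨ p.1 = -1) ∧ p.2 ∈ A) ∧ ∀ n, (L.rotate n).IsChain (HNNBlockNoPinch Cm Cp)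

@[simp] theorem hnnBlockProd_cons (t : Γ) (p : ℤ × Γ) (L : List (ℤ × Γ)) :
    hnnBlockProd t (p :: L) = p.2 * t ^ p.1 * hnnBlockProd t L := by
  simp [hnnBlockProd, mul_assoc]

@[simp] theorem hnnBlockProd_append (t : Γ) (L L' : List (ℤ × Γ)) :
    hnnBlockProd t (L ++ L') = hnnBlockProd t L * hnnBlockProd t L' := by
  simp [hnnBlockProd]

@[simp] theorem hnnBlockProd_nil (t : Γ) : hnnBlockProd t [] = 1 := rfl

theorem hnnProd_hnnBlocksWord (t b : Γ) (p : ℤ × Γ) (L : List (ℤ × Γ)) :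
    hnnProd t p.2 (hnnBlocksWord (p :: L) b) = hnnBlockProd t (p :: L) * b := by
  induction L generalizing p with
  | nil => simp [hnnBlocksWord, hnnProd, mul_assoc]
  | cons q L ih =>
    rw [hnnBlocksWord, hnnProd_cons]
    simp [ih q, mul_assoc]

theorem head?_hnnBlocksWord {α : Type*} (p : ℤ × α) (L : List (ℤ × α)) (b : α) :
    (hnnBlocksWord (p :: L) b).head?.map Prod.fst = some p.1 := by
  cases L <;> rfl

theorem getLast?_hnnBlocksWord {α : Type*} (L : List (ℤ × α)) (b : α) :
    (hnnBlocksWord L b).getLast? = L.getLast?.map fun q => (q.1, b) := by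
  induction L with
  | nil => rfl
  | cons p L ih =>
    cases L with
    | nil => rfl
    | cons q L => simp [hnnBlocksWord, List.getLast?_cons, ih]

theorem hnnReducedWord_hnnBlocksWord {L : List (ℤ × Γ)}
    (hL : ∀ p ∈ L, (p.1 = 1 ∨ p.1 = -1) ∧ p.2 ∈ A) (hLc : L.IsChain (HNNBlockNoPinch Cm Cp))
    (hx : x ∈ A) (hb : b ∈ A) : HNNReducedWord A Cm Cp x (hnnBlocksWord L b) := by
  induction L generalizing x with
  | nil => exact ⟨hx, by simp [hnnBlocksWord], List.isChain_nil⟩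
  | cons p L ih =>
    cases L with
    | nil => exact ⟨hx, by simpa [hnnBlocksWord] using ⟨(hL p (by simp)).1, hb⟩,
        List.isChain_singleton _⟩
    | cons q L =>
      have hpq := List.isChain_cons_cons.1 hLc
      have hq := hL q (by simp)
      have hW := ih (fun r hr => hL r (List.mem_cons_of_mem p hr)) hpq.2 hq.2
      have hp : HNNReducedWord A Cm Cp x [(p.1, q.2)] :=
        ⟨hx, by simpa using ⟨(hL p (by simp)).1, hq.2⟩, List.isChain_singleton _⟩
      refine hp.append hW fun r hr s hs => ?_
      have hs1 := head?_hnnBlocksWord q L b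
      rw [Option.mem_def.1 hs, Option.map_some, Option.some.injEq] at hs1
      simp only [List.getLast?_singleton, Option.mem_def, Option.some.injEq] at hr
      subst hr
      exact fun h => hpq.1 (hs1 ▸ h)

theorem HNNCyclicWord.hnnReducedWord {L : List (ℤ × Γ)} (hL : HNNCyclicWord A Cm Cp L)
    (hx : x ∈ A) (hb : b ∈ A) : HNNReducedWord A Cm Cp x (hnnBlocksWord L b) :=
  hnnReducedWord_hnnBlocksWord hL.1 (by simpa using hL.2 0) hx hb

theorem HNNCyclicWord.rotate {L : List (ℤ × Γ)} (hL : HNNCyclicWord A Cm Cp L) (s : ℕ) :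
    HNNCyclicWord A Cm Cp (L.rotate s) :=
  ⟨fun p hp => hL.1 p (List.mem_rotate.1 hp), fun n => by
    rw [List.rotate_rotate]
    exact hL.2 _⟩

def HNNConjRotation (Cm Cp : Subgroup Γ) (t γ : Γ) (L : List (ℤ × Γ)) : Prop :=
  ∃ r, ∃ hr : r < L.length, ∃ α ∈ toCsub Cm Cp L[r].1,
    γ = α * hnnBlockProd t (L.rotate (r + 1)) * α⁻¹

theorem HNNConjRotation.of_rotate {γ : Γ} {L : List (ℤ × Γ)} {s : ℕ}
    (h : HNNConjRotation Cm Cp t γ (L.rotate s)) : HNNConjRotation Cm Cp t γ L := by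
  obtain ⟨r, hr, α, hα, hγ⟩ := h
  have hL : 0 < L.length := by simp only [List.length_rotate] at hr; omega
  refine ⟨(r + s) % L.length, Nat.mod_lt _ hL, α, by simpa [List.getElem_rotate] using hα, ?_⟩
  rw [hγ, List.rotate_rotate, ← List.rotate_mod, ← List.rotate_mod L (_ + 1), Nat.mod_add_mod,
    show r + s + 1 = s + (r + 1) by omega]

theorem HNNCyclicallyReduced.mem_toCsub_of_conj {γ : Γ} (hγ : HNNCyclicallyReduced A Cm Cp t γ)
    (hH : IsHNN A Cm Cp t) {L : List (ℤ × Γ)} (hL : HNNCyclicWord A Cm Cp L) (hx : x ∈ A)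
    (hγL : γ = x * hnnBlockProd t L * x⁻¹) : ∀ Q ∈ L.getLast?, x ∈ toCsub Cm Cp Q.1 := by
  intro Q hQ
  cases L with
  | nil => simp at hQ
  | cons P L =>
    have hV := hL.hnnReducedWord (mul_mem hx (hL.1 P (by simp)).2) (inv_mem hx)
    have hVγ : hnnProd t (x * P.2) (hnnBlocksWord (P :: L) x⁻¹) = γ := by
      rw [hnnProd_eq_mul_hnnProd_one, mul_assoc, ← hnnProd_eq_mul_hnnProd_one,
        hnnProd_hnnBlocksWord, hγL, mul_assoc]
    have hlast := hγ.getLast_mem hH hV hVγ (p := (Q.1, x⁻¹))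
      (by rw [getLast?_hnnBlocksWord, Option.mem_def.1 hQ]; rfl)
    simpa using hlast

theorem hnnProd_conj_hnnBlocksWord (t x a : Γ) (w : List (ℤ × Γ)) (ν : ℤ) (P : ℤ × Γ)
    (L : List (ℤ × Γ)) :
    hnnProd t x (w ++ [(ν, a * P.2)] ++ (hnnBlocksWord (P :: L) a⁻¹ ++
      hnnInvWord x (w ++ [(ν, a)]))) =
      hnnProd t x (w ++ [(ν, a)]) * hnnBlockProd t (P :: L) * (hnnProd t x (w ++ [(ν, a)]))⁻¹ := by
  have h₁ : hnnProd t x (w ++ [(ν, a * P.2)]) = hnnProd t x (w ++ [(ν, a)]) * P.2 :=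
    hnnProd_concat_mul t x P.2 w (ν, a)
  have h₂ := hnnProd_hnnBlocksWord t a⁻¹ P L
  have h₃ := hnnProd_hnnInvWord t x (w ++ [(ν, a)])
  rw [hnnProd_eq_mul_hnnProd_one] at h₂
  rw [hnnLastCoeff_concat, hnnProd_eq_mul_hnnProd_one] at h₃
  rw [hnnProd_append t x (w ++ [(ν, a * P.2)]), hnnProd_append t 1 (hnnBlocksWord _ _), h₁, ← h₃,
    eq_inv_mul_of_mul_eq h₂]
  group

theorem HNNReducedWord.conj_hnnBlocksWord {ν : ℤ} {a : Γ}
    (hw : HNNReducedWord A Cm Cp x (w ++ [(ν, a)])) {P : ℤ × Γ} {L : List (ℤ × Γ)}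
    (hL : HNNCyclicWord A Cm Cp (P :: L)) (hhead : P.1 = -ν → a * P.2 ∉ toCsub Cm Cp ν)
    (hlast : ∀ Q ∈ (P :: L).getLast?, Q.1 = ν → a⁻¹ ∉ toCsub Cm Cp ν) :
    HNNReducedWord A Cm Cp x (w ++ [(ν, a * P.2)] ++ (hnnBlocksWord (P :: L) a⁻¹ ++
      hnnInvWord x (w ++ [(ν, a)]))) := by
  have hP := (hL.1 P (by simp)).2
  have ha : a ∈ A := (hw.of_mem (p := (ν, a)) (by simp)).2
  have hV₃ := hw.inv
  rw [hnnLastCoeff_concat] at hV₃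
  have hV₂₃ := (hL.hnnReducedWord hP (inv_mem ha)).append hV₃ fun Q hQ q hq => by
    rw [getLast?_hnnBlocksWord, Option.mem_def, Option.map_eq_some_iff] at hQ
    obtain ⟨Q, hQ, rfl⟩ := hQ
    rw [head?_hnnInvWord_concat, Option.mem_def, Option.some.injEq] at hq
    subst hq
    intro h
    have hQν : Q.1 = ν := by simp only [neg_inj] at h; exact h.symm
    simpa [hQν] using hlast Q hQ hQν
  refine (hw.concat_mul hP).append hV₂₃ fun p hp q hq => ?_
  simp only [List.getLast?_concat, Option.mem_def, Option.some.injEq] at hp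
  rw [List.head?_append_of_ne_nil _ (by cases L <;> simp [hnnBlocksWord])] at hq
  have hq1 := head?_hnnBlocksWord P L a⁻¹
  rw [Option.mem_def.1 hq, Option.map_some, Option.some.injEq] at hq1
  subst hp
  exact fun h => hhead (hq1 ▸ h)

/-- Otherwise `x ⋯ t^ν (a u₁) t^{μ₁} ⋯ t^{μₘ} a⁻¹ t^{-ν} ⋯ x⁻¹` would be a reduced form of `γ`
whose cyclic junction `t^{-ε₁} x⁻¹ x t^{ε₁}` is a pinch. -/
theorem HNNCyclicallyReduced.pinch_of_conj {γ : Γ} (hγ : HNNCyclicallyReduced A Cm Cp t γ)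
    (hH : IsHNN A Cm Cp t) {ν : ℤ} {a : Γ} (hw : HNNReducedWord A Cm Cp x (w ++ [(ν, a)]))
    {P : ℤ × Γ} {L : List (ℤ × Γ)} (hL : HNNCyclicWord A Cm Cp (P :: L))
    (hγL : γ = hnnProd t x (w ++ [(ν, a)]) * hnnBlockProd t (P :: L) *
      (hnnProd t x (w ++ [(ν, a)]))⁻¹) :
    (P.1 = -ν ∧ a * P.2 ∈ toCsub Cm Cp ν) ∨
      ∃ Q ∈ (P :: L).getLast?, Q.1 = ν ∧ a⁻¹ ∈ toCsub Cm Cp ν := by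
  by_contra hno
  have hV := hw.conj_hnnBlocksWord hL (fun h h' => hno (.inl ⟨h, h'⟩))
    (fun Q hQ h h' => hno (.inr ⟨Q, hQ, h, h'⟩))
  obtain ⟨e, w₁, hew⟩ := List.exists_cons_of_ne_nil (by simp : w ++ [(ν, a)] ≠ [])
  refine hγ.not_pinch_wrap hH hV ((hnnProd_conj_hnnBlocksWord ..).trans hγL.symm)
    (p := (-e.1, x⁻¹)) ?_ ?_ (by simp)
  · rw [hew, List.getLast?_append_of_ne_nil _ (by simp [hnnInvWord]),
      List.getLast?_append_of_ne_nil _ (by simp [hnnInvWord]), getLast?_hnnInvWord_cons]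
  · rw [List.head?_append_of_ne_nil _ (by simp)]
    cases w <;> simp only [List.nil_append, List.cons_append, List.cons.injEq] at hew <;>
      simp [← hew.1]

theorem HNNCyclicallyReduced.exists_conj_rotate {γ : Γ} (hγ : HNNCyclicallyReduced A Cm Cp t γ)
    (hH : IsHNN A Cm Cp t) {ν : ℤ} {a : Γ} (hw : HNNReducedWord A Cm Cp x (w ++ [(ν, a)]))
    {L : List (ℤ × Γ)} (hL : HNNCyclicWord A Cm Cp L) (hL₀ : L ≠ [])
    (hγL : γ = hnnProd t x (w ++ [(ν, a)]) * hnnBlockProd t L *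
      (hnnProd t x (w ++ [(ν, a)]))⁻¹) :
    ∃ s, ∃ d ∈ A, t ^ ν * a * hnnBlockProd t L * (t ^ ν * a)⁻¹ =
      d * hnnBlockProd t (L.rotate s) * d⁻¹ := by
  have hν := (hw.of_mem (p := (ν, a)) (by simp)).1
  obtain ⟨P, L, rfl⟩ := List.exists_cons_of_ne_nil hL₀
  rcases hγ.pinch_of_conj hH hw hL hγL with ⟨hPν, hPa⟩ | ⟨Q, hQ, hQν, ha⟩
  · refine ⟨1, _, hH.toCsub_le _ (hH.conj_mem_toCsub_neg hν hPa), ?_⟩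
    simp only [List.rotate_cons_succ, List.rotate_zero, hnnBlockProd_cons, hnnBlockProd_append,
      hnnBlockProd_nil, hPν]
    group
  · obtain ⟨L', hL'⟩ := List.getLast?_eq_some_iff.1 hQ
    have hQA := (hL.1 Q (by simp [hL'])).2
    have hd := hH.toCsub_le _ (hH.conj_mem_toCsub_neg hν (inv_mem_iff.1 ha))
    refine ⟨L'.length, _, mul_mem hd (inv_mem hQA), ?_⟩
    simp only [hL', List.rotate_append_length_eq, hnnBlockProd_cons, hnnBlockProd_append,
      hnnBlockProd_nil, hQν]
    group

theorem HNNCyclicallyReduced.hnnConjRotation {γ : Γ} (hγ : HNNCyclicallyReduced A Cm Cp t γ)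
    (hH : IsHNN A Cm Cp t) (n : ℕ) :
    ∀ x w L, w.length = n → HNNReducedWord A Cm Cp x w → HNNCyclicWord A Cm Cp L → L ≠ [] →
      γ = hnnProd t x w * hnnBlockProd t L * (hnnProd t x w)⁻¹ → HNNConjRotation Cm Cp t γ L := by
  induction n with
  | zero =>
    intro x w L hn hw hL hL₀ hγL
    obtain rfl := List.length_eq_zero_iff.1 hn
    rw [hnnProd_nil] at hγL
    have hx := hγ.mem_toCsub_of_conj hH hL hw.1 hγL _ (List.getLast?_eq_some_getLast hL₀)
    refine ⟨L.length - 1, by simpa [List.length_pos_iff] using hL₀, x, ?_, ?_⟩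
    · rwa [List.getLast_eq_getElem] at hx
    · rwa [Nat.sub_add_cancel (List.length_pos_iff.2 hL₀), List.rotate_length]
  | succ n ih =>
    intro x w L hn hw hL hL₀ hγL
    obtain ⟨w, ⟨ν, a⟩, rfl⟩ := (List.eq_nil_or_concat' w).resolve_left (by rintro rfl; simp at hn)
    obtain ⟨s, d, hd, hconj⟩ := hγ.exists_conj_rotate hH hw hL hL₀ hγL
    obtain ⟨y, v, hv, hvw, hyv⟩ := hw.left_of_append.exists_mul (t := t) hd
    refine (ih y v (L.rotate s) (by simp at hn; omega) hv (hL.rotate s) (by simpa using hL₀) ?_).of_rotate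
    rw [hγL, hyv, hnnProd_concat]
    dsimp only
    calc _ = hnnProd t x w * (t ^ ν * a * hnnBlockProd t L * (t ^ ν * a)⁻¹) *
          (hnnProd t x w)⁻¹ := by group
      _ = _ := by rw [hconj]; group

theorem hnnCyclicWord_ofFn {m : ℕ} (hm : 0 < m) {u : Fin m → Γ}
    {μ : Fin m → ℤ} (hu : ∀ i, u i ∈ A) (hμ : ∀ i, μ i = 1 ∨ μ i = -1)
    (hnopinch : ∀ i j : Fin m, (i : ℕ) + 1 = (j : ℕ) → μ j = -μ i → u j ∉ toCsub Cm Cp (μ i))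
    (hcycform : m = 1 ∨ ¬(μ ⟨0, hm⟩ = -μ ⟨m - 1, Nat.sub_one_lt_of_lt hm⟩ ∧
        u ⟨0, hm⟩ ∈ toCsub Cm Cp (μ ⟨m - 1, Nat.sub_one_lt_of_lt hm⟩))) :
    HNNCyclicWord A Cm Cp (List.ofFn fun i => (μ i, u i)) := by
  refine ⟨by simpa [List.mem_ofFn] using fun i => ⟨hμ i, hu i⟩,
    List.isChain_rotate_of_getElem fun i hi => ?_⟩
  simp only [List.length_ofFn] at hi ⊢
  simp only [List.getElem_ofFn, HNNBlockNoPinch]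
  by_cases hi' : i + 1 < m
  · simp only [Nat.mod_eq_of_lt hi']
    exact hnopinch _ _ rfl
  · obtain rfl : i = m - 1 := by omega
    simp only [Nat.sub_add_cancel hm, Nat.mod_self]
    rcases hcycform with rfl | h
    · have := hμ ⟨0, hm⟩
      simp only [Nat.sub_self]
      omega
    · exact fun h₁ h₂ => h ⟨h₁, h₂⟩

end

/-- Indices are `0`-based: `u i` and `μ i` are the paper's `u_{i+1}` and `μ_{i+1}`. -/
theorem hnn_conj_cyclic_conjugate (A Cm Cp : Subgroup Γ) (t : Γ)
    (hH : IsHNN A Cm Cp t) (γ : Γ)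
    (hcyc : HNNCyclicallyReduced A Cm Cp t γ)
    (m : ℕ) (hm : 0 < m) (u : Fin m → Γ) (μ : Fin m → ℤ)
    (hu : ∀ i, u i ∈ A) (hμ : ∀ i, μ i = 1 ∨ μ i = -1)
    (hnopinch : ∀ i j : Fin m, (i : ℕ) + 1 = (j : ℕ) →
      μ j = -μ i → u j ∉ toCsub Cm Cp (μ i))
    (hcycform : m = 1 ∨
      ¬(μ ⟨0, hm⟩ = -μ ⟨m - 1, by omega⟩ ∧
        u ⟨0, hm⟩ ∈ toCsub Cm Cp (μ ⟨m - 1, by omega⟩)))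
    (hconj : ∃ g : Γ, γ = g * (List.ofFn fun i => u i * t ^ μ i).prod * g⁻¹) :
    ∃ r : Fin m, ∃ α ∈ toCsub Cm Cp (μ r),
      γ = α * ((List.ofFn fun i => u i * t ^ μ i).drop ((r : ℕ) + 1) ++
        (List.ofFn fun i => u i * t ^ μ i).take ((r : ℕ) + 1)).prod * α⁻¹ := by
  set L := List.ofFn fun i => (μ i, u i)
  have hblocks : (List.ofFn fun i => u i * t ^ μ i) = L.map fun p => p.2 * t ^ p.1 := by
    simp [L, List.map_ofFn, Function.comp_def]
  obtain ⟨g, hg⟩ := hconj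
  obtain ⟨x, w, hw, rfl⟩ := hH.exists_hnnReducedWord g
  obtain ⟨r, hr, α, hα, hγα⟩ := hcyc.hnnConjRotation hH _ x w L rfl hw
    (hnnCyclicWord_ofFn hm hu hμ hnopinch hcycform) (by simp [L]; omega)
    (by rw [hg, hblocks]; rfl)
  have hrm : r < m := by simpa [L] using hr
  refine ⟨⟨r, hrm⟩, α, by simpa [L] using hα, ?_⟩
  rw [← List.rotate_eq_drop_append_take (by simpa using hrm), hblocks, ← List.map_rotate]
  exact hγα
end
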